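/- Let V, Q be real Hilbert spaces, a : V × V → ℝ a bilinear form coercive on the kernel Z = {v ∈ V : b(v,q) = 0 ∀q ∈ Q} with constant C_S (a(v,v) ≥ C_S‖v‖² for v ∈ Z), bounded with constant C_a, and b : V × Q → ℝ bounded with constant C_b and satisfying the inf-sup condition sup_{v≠0} b(v,q)/‖v‖ ≥ θ̂‖q‖ for all q ∈ Q, with θ̂ > 0. Then the saddle-point form C((u,p),(v,q)) := a(u,v) + b(v,p) + b(u,q) satisfies a global inf-sup condition on V × Q: there exists α̂ > 0 (depending only on C_S, C_a, C_b, θ̂) such that for all (u,p), sup_{(v,q)≠0} C((u,p),(v,q))/‖(v,q)‖ ≥ α̂‖(u,p)‖, where ‖(v,q)‖² = ‖v‖² + ‖q‖². -/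

import Mathlib

open scoped RealInnerProductSpace

set_option maxHeartbeats 2000000 in
/-- Brezzi saddle-point stability: kernel coercivity of `a`, boundedness, and the
inf-sup condition for `b` yield a global inf-sup condition for the saddle-point form. -/
theorem stmt8 {V Q : Type*} [NormedAddCommGroup V] [InnerProductSpace ℝ V] [CompleteSpace V]
    [NormedAddCommGroup Q] [InnerProductSpace ℝ Q] [CompleteSpace Q]
    (a : V → V → ℝ) (b : V → Q → ℝ) (CS Ca Cb θh : ℝ)
    (hCS : 0 < CS) (hθ : 0 < θh)
    (ha_lin₁ : ∀ v, IsLinearMap ℝ (fun u => a u v))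
    (ha_lin₂ : ∀ u, IsLinearMap ℝ (a u))
    (hb_lin₁ : ∀ q, IsLinearMap ℝ (fun v => b v q))
    (hb_lin₂ : ∀ v, IsLinearMap ℝ (b v))
    (ha_bdd : ∀ u v, |a u v| ≤ Ca * ‖u‖ * ‖v‖)
    (hb_bdd : ∀ v q, |b v q| ≤ Cb * ‖v‖ * ‖q‖)
    (ha_coer : ∀ v : V, (∀ q : Q, b v q = 0) → CS * ‖v‖ ^ 2 ≤ a v v)
    (hb_infsup : ∀ q : Q, θh * ‖q‖ ≤ ⨆ v : {v : V // v ≠ 0}, b (v : V) q / ‖(v : V)‖) :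
    ∃ αh > 0, ∀ u : V, ∀ p : Q,
      αh * Real.sqrt (‖u‖ ^ 2 + ‖p‖ ^ 2) ≤
        ⨆ vq : {vq : V × Q // vq ≠ 0},
          (a u (vq : V × Q).1 + b (vq : V × Q).1 p + b u (vq : V × Q).2) /
            Real.sqrt (‖(vq : V × Q).1‖ ^ 2 + ‖(vq : V × Q).2‖ ^ 2) := by
  classical
  -- nonnegative versions of the boundedness constants
  set Ca' := max Ca 0 with hCa'def
  set Cb' := max Cb 0 with hCb'def
  have hCa0 : 0 ≤ Ca' := le_max_right _ _
  have hCb0 : 0 ≤ Cb' := le_max_right _ _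
  have ha' : ∀ u v : V, |a u v| ≤ Ca' * ‖u‖ * ‖v‖ := by
    intro u v
    refine (ha_bdd u v).trans ?_
    have h1 : Ca * ‖u‖ ≤ Ca' * ‖u‖ :=
      mul_le_mul_of_nonneg_right (le_max_left _ _) (norm_nonneg u)
    exact mul_le_mul_of_nonneg_right h1 (norm_nonneg v)
  have hb' : ∀ (v : V) (q : Q), |b v q| ≤ Cb' * ‖v‖ * ‖q‖ := by
    intro v q
    refine (hb_bdd v q).trans ?_
    have h1 : Cb * ‖v‖ ≤ Cb' * ‖v‖ :=
      mul_le_mul_of_nonneg_right (le_max_left _ _) (norm_nonneg v)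
    exact mul_le_mul_of_nonneg_right h1 (norm_nonneg q)
  -- the Riesz representative map `T : Q →L[ℝ] V` with `⟪T q, v⟫ = b v q`
  have hbv : ∀ q : Q, ∀ v : V, ‖b v q‖ ≤ (Cb' * ‖q‖) * ‖v‖ := by
    intro q v
    rw [Real.norm_eq_abs]
    calc |b v q| ≤ Cb' * ‖v‖ * ‖q‖ := hb' v q
      _ = (Cb' * ‖q‖) * ‖v‖ := by ring
  let f : Q → (V →L[ℝ] ℝ) := fun q =>
    LinearMap.mkContinuous
      { toFun := fun v => b v q
        map_add' := (hb_lin₁ q).map_add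
        map_smul' := (hb_lin₁ q).map_smul }
      (Cb' * ‖q‖) (hbv q)
  have hf_apply : ∀ (q : Q) (v : V), f q v = b v q := fun _ _ => rfl
  have hf_norm : ∀ q : Q, ‖f q‖ ≤ Cb' * ‖q‖ := fun q =>
    LinearMap.mkContinuous_norm_le _ (mul_nonneg hCb0 (norm_nonneg q)) _
  let Tf : Q → V := fun q => (InnerProductSpace.toDual ℝ V).symm (f q)
  have hT_inner : ∀ (q : Q) (v : V), (inner ℝ (Tf q) v : ℝ) = b v q := fun q v =>
    InnerProductSpace.toDual_symm_apply
  have hT_norm : ∀ q : Q, ‖Tf q‖ ≤ Cb' * ‖q‖ := fun q => by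
    rw [show ‖Tf q‖ = ‖f q‖ from LinearIsometryEquiv.norm_map _ _]
    exact hf_norm q
  have hT_add : ∀ q q' : Q, Tf (q + q') = Tf q + Tf q' := by
    intro q q'
    refine ext_inner_right ℝ fun v => ?_
    rw [inner_add_left, hT_inner, hT_inner, hT_inner, (hb_lin₂ v).map_add]
  have hT_smul : ∀ (c : ℝ) (q : Q), Tf (c • q) = c • Tf q := by
    intro c q
    refine ext_inner_right ℝ fun v => ?_
    rw [real_inner_smul_left, hT_inner, hT_inner, (hb_lin₂ v).map_smul, smul_eq_mul]
  let T : Q →L[ℝ] V :=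
    LinearMap.mkContinuous
      { toFun := Tf, map_add' := hT_add, map_smul' := fun c q => hT_smul c q }
      Cb' (fun q => by simpa [mul_assoc] using hT_norm q)
  have hTapp : ∀ q : Q, T q = Tf q := fun _ => rfl
  -- the inf-sup condition gives a lower bound for `T`
  have hT_lower : ∀ q : Q, θh * ‖q‖ ≤ ‖Tf q‖ := by
    intro q
    refine (hb_infsup q).trans ?_
    rcases isEmpty_or_nonempty {v : V // v ≠ 0} with hE | hNE
    · rw [Real.iSup_of_isEmpty]; exact norm_nonneg _
    · refine ciSup_le fun v => ?_
      rw [div_le_iff₀ (norm_pos_iff.mpr v.prop), ← hT_inner q v.val]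
      exact real_inner_le_norm _ _
  -- `T` has closed range
  have hanti : AntilipschitzWith θh⁻¹.toNNReal T := by
    refine T.antilipschitz_of_bound fun q => ?_
    rw [Real.coe_toNNReal _ (inv_nonneg.mpr hθ.le), hTapp]
    rw [← mul_le_mul_iff_right₀ hθ, ← mul_assoc, mul_inv_cancel₀ hθ.ne', one_mul]
    exact hT_lower q
  have hKclosed : IsClosed (Set.range T) := hanti.isClosed_range T.uniformContinuous
  set K : Submodule ℝ V := LinearMap.range (T : Q →ₗ[ℝ] V) with hKdef
  have hKc : IsClosed (K : Set V) := by
    simpa [hKdef, LinearMap.coe_range] using hKclosed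
  haveI : CompleteSpace K := hKc.completeSpace_coe
  set Z : Submodule ℝ V := Kᗮ with hZdef
  -- the stability constant
  obtain ⟨c₁, hc₁def⟩ : ∃ c : ℝ, c = (1 + Ca' / θh) / CS + 1 / θh := ⟨_, rfl⟩
  obtain ⟨c₂, hc₂def⟩ : ∃ c : ℝ, c = (1 + Ca' * c₁) / θh := ⟨_, rfl⟩
  have hc₁ : 0 < c₁ := by
    have h1 : 0 < (1 + Ca' / θh) / CS := by positivity
    have h2 : 0 < 1 / θh := by positivity
    rw [hc₁def]; linarith
  have hc₂ : 0 < c₂ := by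
    rw [hc₂def]
    have h1 : 0 ≤ Ca' * c₁ := mul_nonneg hCa0 hc₁.le
    exact div_pos (by linarith) hθ
  have hcc : 0 < c₁ + c₂ := by linarith
  refine ⟨(c₁ + c₂)⁻¹, inv_pos.mpr hcc, fun u p => ?_⟩
  -- abbreviate the saddle-point quotient
  set g : {vq : V × Q // vq ≠ 0} → ℝ := fun vq =>
    (a u vq.val.1 + b vq.val.1 p + b u vq.val.2) /
      Real.sqrt (‖vq.val.1‖ ^ 2 + ‖vq.val.2‖ ^ 2) with hgdef
  have hgoal : (⨆ vq : {vq : V × Q // vq ≠ 0},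
      (a u (vq : V × Q).1 + b (vq : V × Q).1 p + b u (vq : V × Q).2) /
        Real.sqrt (‖(vq : V × Q).1‖ ^ 2 + ‖(vq : V × Q).2‖ ^ 2)) = ⨆ vq, g vq := rfl
  rw [hgoal]
  set S : ℝ := ⨆ vq, g vq with hSdef
  -- positivity of the denominators
  have hNpos : ∀ vq : {vq : V × Q // vq ≠ 0},
      0 < Real.sqrt (‖vq.val.1‖ ^ 2 + ‖vq.val.2‖ ^ 2) := by
    intro vq
    apply Real.sqrt_pos.mpr
    rcases eq_or_ne vq.val.1 0 with h1 | h1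
    · have h2 : vq.val.2 ≠ 0 := by
        intro h2
        exact vq.prop (Prod.ext h1 h2)
      have := norm_pos_iff.mpr h2
      nlinarith [sq_nonneg ‖vq.val.1‖]
    · have := norm_pos_iff.mpr h1
      nlinarith [sq_nonneg ‖vq.val.2‖]
  have hNv : ∀ vq : {vq : V × Q // vq ≠ 0},
      ‖vq.val.1‖ ≤ Real.sqrt (‖vq.val.1‖ ^ 2 + ‖vq.val.2‖ ^ 2) := by
    intro vq
    exact (Real.le_sqrt (norm_nonneg _) (by positivity)).mpr
      (by nlinarith [sq_nonneg ‖vq.val.2‖])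
  have hNq : ∀ vq : {vq : V × Q // vq ≠ 0},
      ‖vq.val.2‖ ≤ Real.sqrt (‖vq.val.1‖ ^ 2 + ‖vq.val.2‖ ^ 2) := by
    intro vq
    exact (Real.le_sqrt (norm_nonneg _) (by positivity)).mpr
      (by nlinarith [sq_nonneg ‖vq.val.1‖])
  -- the range of `g` is bounded above
  have hbdd : BddAbove (Set.range g) := by
    refine ⟨Ca' * ‖u‖ + Cb' * ‖p‖ + Cb' * ‖u‖, ?_⟩
    rintro x ⟨vq, rfl⟩
    set N := Real.sqrt (‖vq.val.1‖ ^ 2 + ‖vq.val.2‖ ^ 2) with hNdef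
    have hN := hNpos vq
    rw [hgdef]
    simp only
    rw [div_le_iff₀ hN]
    have e1 : a u vq.val.1 ≤ Ca' * ‖u‖ * N := by
      refine (le_abs_self _).trans ((ha' u _).trans ?_)
      exact mul_le_mul_of_nonneg_left (hNv vq) (mul_nonneg hCa0 (norm_nonneg u))
    have e2 : b vq.val.1 p ≤ Cb' * ‖p‖ * N := by
      refine (le_abs_self _).trans ?_
      calc |b vq.val.1 p| ≤ Cb' * ‖vq.val.1‖ * ‖p‖ := hb' _ _
        _ = Cb' * ‖p‖ * ‖vq.val.1‖ := by ring
        _ ≤ Cb' * ‖p‖ * N := mul_le_mul_of_nonneg_left (hNv vq)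
            (mul_nonneg hCb0 (norm_nonneg p))
    have e3 : b u vq.val.2 ≤ Cb' * ‖u‖ * N := by
      refine (le_abs_self _).trans ?_
      calc |b u vq.val.2| ≤ Cb' * ‖u‖ * ‖vq.val.2‖ := hb' _ _
        _ ≤ Cb' * ‖u‖ * N := mul_le_mul_of_nonneg_left (hNq vq)
            (mul_nonneg hCb0 (norm_nonneg u))
    nlinarith [hN.le]
  -- the key testing inequality
  have hC : ∀ (v : V) (q : Q),
      a u v + b v p + b u q ≤ S * Real.sqrt (‖v‖ ^ 2 + ‖q‖ ^ 2) := by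
    intro v q
    rcases eq_or_ne ((v, q) : V × Q) 0 with h | h
    · rw [Prod.mk_eq_zero] at h
      obtain ⟨h1, h2⟩ := h
      subst h1; subst h2
      rw [(ha_lin₂ u).map_zero, (hb_lin₁ p).map_zero, (hb_lin₂ u).map_zero]
      simp
    · have h1 := le_ciSup hbdd ⟨(v, q), h⟩
      rw [hgdef] at h1
      simp only at h1
      rw [div_le_iff₀ (hNpos ⟨(v, q), h⟩)] at h1
      exact h1
  -- nonnegativity of `S`
  have hS0 : 0 ≤ S := by
    rcases isEmpty_or_nonempty {vq : V × Q // vq ≠ 0} with hE | hNE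
    · rw [hSdef, Real.iSup_of_isEmpty]
    · obtain ⟨vq⟩ := hNE
      have h1 := le_ciSup hbdd vq
      have h2 := le_ciSup hbdd ⟨-vq.val, neg_ne_zero.mpr vq.prop⟩
      rw [hgdef] at h1 h2
      simp only [Prod.fst_neg, Prod.snd_neg, norm_neg] at h2
      rw [(ha_lin₂ u).map_neg, (hb_lin₁ p).map_neg, (hb_lin₂ u).map_neg] at h2
      have e : (-a u vq.val.1 + -b vq.val.1 p + -b u vq.val.2) /
          Real.sqrt (‖vq.val.1‖ ^ 2 + ‖vq.val.2‖ ^ 2)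
          = -((a u vq.val.1 + b vq.val.1 p + b u vq.val.2) /
            Real.sqrt (‖vq.val.1‖ ^ 2 + ‖vq.val.2‖ ^ 2)) := by ring
      rw [e] at h2
      linarith
  -- consequences: testing with (v, 0) and (0, q)
  have hCv : ∀ v : V, a u v + b v p ≤ S * ‖v‖ := by
    intro v
    have h1 := hC v 0
    rw [(hb_lin₂ u).map_zero] at h1
    simpa [Real.sqrt_sq (norm_nonneg v)] using h1
  have hCq : ∀ q : Q, b u q ≤ S * ‖q‖ := by
    intro q
    have h1 := hC 0 q
    rw [(ha_lin₂ u).map_zero, (hb_lin₁ p).map_zero] at h1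
    simpa [Real.sqrt_sq (norm_nonneg q)] using h1
  -- pressure estimate: θh‖p‖ ≤ S + Ca'‖u‖
  have hp : θh * ‖p‖ ≤ S + Ca' * ‖u‖ := by
    refine (hb_infsup p).trans ?_
    rcases isEmpty_or_nonempty {v : V // v ≠ 0} with hE | hNE
    · rw [Real.iSup_of_isEmpty]
      have := mul_nonneg hCa0 (norm_nonneg u)
      linarith
    · refine ciSup_le fun v => ?_
      rw [div_le_iff₀ (norm_pos_iff.mpr v.prop)]
      have h1 := hCv v.val
      have h2 : -a u v.val ≤ Ca' * ‖u‖ * ‖v.val‖ := (neg_le_abs _).trans (ha' u v.val)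
      have h3 : (S + Ca' * ‖u‖) * ‖v.val‖ = S * ‖v.val‖ + Ca' * ‖u‖ * ‖v.val‖ := by ring
      linarith
  -- orthogonal decomposition of u
  set u₀ : V := (Submodule.orthogonalProjectionOnto Z u : V) with hu₀def
  set w : V := u - u₀ with hwdef
  have hu₀Z : u₀ ∈ Z := (Submodule.orthogonalProjectionOnto Z u).2
  have hwZ : w ∈ Zᗮ := Submodule.sub_starProjection_mem_orthogonal (K := Z) u
  have hwK : w ∈ K := by
    rw [hZdef, Submodule.orthogonal_orthogonal] at hwZ
    exact hwZ
  obtain ⟨qh, hqh⟩ := (LinearMap.mem_range).mp hwK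
  rw [ContinuousLinearMap.coe_coe, hTapp] at hqh
  -- b u₀ q = 0 for all q
  have hbu₀ : ∀ q : Q, b u₀ q = 0 := by
    intro q
    rw [← hT_inner q u₀]
    exact (Submodule.mem_orthogonal K u₀).mp hu₀Z (Tf q) ⟨q, hTapp q⟩
  -- ‖w‖ ≤ S / θh
  have hw_inner : b u qh = ‖w‖ ^ 2 := by
    rw [← hT_inner qh u, hqh]
    have hu : u = u₀ + w := by rw [hwdef]; abel
    nth_rewrite 1 [hu]
    rw [inner_add_right, real_inner_self_eq_norm_sq]
    have h0 : (inner ℝ w u₀ : ℝ) = 0 := by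
      rw [real_inner_comm]
      exact (Submodule.mem_orthogonal Z w).mp hwZ u₀ hu₀Z
    rw [h0, zero_add]
  have hqh_norm : θh * ‖qh‖ ≤ ‖w‖ := by
    have := hT_lower qh
    rwa [hqh] at this
  have hwS : ‖w‖ ≤ S / θh := by
    have h1 : θh * ‖w‖ ^ 2 ≤ S * ‖w‖ := by
      have h2 : b u qh ≤ S * ‖qh‖ := hCq qh
      have h3 : θh * (S * ‖qh‖) = S * (θh * ‖qh‖) := by ring
      have h4 : S * (θh * ‖qh‖) ≤ S * ‖w‖ := mul_le_mul_of_nonneg_left hqh_norm hS0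
      have h5 : θh * (b u qh) ≤ θh * (S * ‖qh‖) := mul_le_mul_of_nonneg_left h2 hθ.le
      have h6 : θh * (b u qh) = θh * ‖w‖ ^ 2 := by rw [hw_inner]
      linarith
    rw [le_div_iff₀ hθ]
    rcases eq_or_lt_of_le (norm_nonneg w) with h | h
    · rw [← h, zero_mul]; exact hS0
    · refine le_of_mul_le_mul_right ?_ h
      calc ‖w‖ * θh * ‖w‖ = θh * ‖w‖ ^ 2 := by ring
        _ ≤ S * ‖w‖ := h1
  -- ‖u₀‖ ≤ (S + Ca' * (S / θh)) / CS
  have hu₀S : ‖u₀‖ ≤ (S + Ca' * (S / θh)) / CS := by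
    have hcoer := ha_coer u₀ hbu₀
    have hsub : a u₀ u₀ = a u u₀ - a w u₀ := by
      have hu : u₀ = u - w := by rw [hwdef]; abel
      nth_rewrite 1 [hu]
      exact (ha_lin₁ u₀).map_sub u w
    have h1 : a u u₀ ≤ S * ‖u₀‖ := by
      have := hCv u₀
      rw [hbu₀ p] at this
      linarith
    have h2 : -a w u₀ ≤ Ca' * (S / θh) * ‖u₀‖ := by
      refine (neg_le_abs _).trans ((ha' w u₀).trans ?_)
      have : Ca' * ‖w‖ ≤ Ca' * (S / θh) := mul_le_mul_of_nonneg_left hwS hCa0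
      exact mul_le_mul_of_nonneg_right this (norm_nonneg u₀)
    have h3 : CS * ‖u₀‖ ^ 2 ≤ (S + Ca' * (S / θh)) * ‖u₀‖ := by
      have e : (S + Ca' * (S / θh)) * ‖u₀‖ = S * ‖u₀‖ + Ca' * (S / θh) * ‖u₀‖ := by ring
      linarith
    rw [le_div_iff₀ hCS]
    rcases eq_or_lt_of_le (norm_nonneg u₀) with h | h
    · rw [← h, zero_mul]
      have hd : 0 ≤ S / θh := div_nonneg hS0 hθ.le
      have := mul_nonneg hCa0 hd
      linarith
    · refine le_of_mul_le_mul_right ?_ h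
      calc ‖u₀‖ * CS * ‖u₀‖ = CS * ‖u₀‖ ^ 2 := by ring
        _ ≤ (S + Ca' * (S / θh)) * ‖u₀‖ := h3
  -- combine
  have hu_norm : ‖u‖ ≤ S * c₁ := by
    have h1 : ‖u‖ ≤ ‖u₀‖ + ‖w‖ := by
      calc ‖u‖ = ‖u₀ + w‖ := by rw [hwdef]; congr 1; abel
        _ ≤ ‖u₀‖ + ‖w‖ := norm_add_le _ _
    have h2 : (S + Ca' * (S / θh)) / CS + S / θh = S * c₁ := by
      rw [hc₁def]; field_simp
    linarith
  have hp_norm : ‖p‖ ≤ S * c₂ := by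
    have h1 : Ca' * ‖u‖ ≤ Ca' * (S * c₁) := mul_le_mul_of_nonneg_left hu_norm hCa0
    have h2 : θh * ‖p‖ ≤ S * (1 + Ca' * c₁) := by
      have e : S * (1 + Ca' * c₁) = S + Ca' * (S * c₁) := by ring
      linarith
    rw [hc₂def]
    rw [show S * ((1 + Ca' * c₁) / θh) = S * (1 + Ca' * c₁) / θh by ring,
      le_div_iff₀ hθ]
    linarith
  have hsqrt : Real.sqrt (‖u‖ ^ 2 + ‖p‖ ^ 2) ≤ S * (c₁ + c₂) := by
    have h1 : Real.sqrt (‖u‖ ^ 2 + ‖p‖ ^ 2) ≤ ‖u‖ + ‖p‖ := by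
      rw [show ‖u‖ + ‖p‖ = Real.sqrt ((‖u‖ + ‖p‖) ^ 2) by
        rw [Real.sqrt_sq (by positivity)]]
      refine Real.sqrt_le_sqrt ?_
      have e : (‖u‖ + ‖p‖) ^ 2 = ‖u‖ ^ 2 + 2 * (‖u‖ * ‖p‖) + ‖p‖ ^ 2 := by ring
      have := mul_nonneg (norm_nonneg u) (norm_nonneg p)
      linarith
    have h2 : S * (c₁ + c₂) = S * c₁ + S * c₂ := by ring
    linarith
  calc (c₁ + c₂)⁻¹ * Real.sqrt (‖u‖ ^ 2 + ‖p‖ ^ 2)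
      ≤ (c₁ + c₂)⁻¹ * (S * (c₁ + c₂)) :=
        mul_le_mul_of_nonneg_left hsqrt (inv_nonneg.mpr hcc.le)
    _ = S := by field_simp
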